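/- Let F : ℝ³ → ℝ⁴ be the chart map of the cubic model of S³, defined by F(x) = (1, x)/√(1 + ‖x‖₂²). Then the metric distortion range of μ₃ is exactly [1/4, 1]: the set { ‖DF(x)(v)‖₂ / ‖v‖₂ : x ∈ ℝ³ with ‖x‖_∞ ≤ 1, v ∈ ℝ³, v ≠ 0 } equals the closed interval [1/4, 1]. -/

import Mathlib

open RealInnerProductSpace

/-- The sup norm of a point of Euclidean space (the `ℓ^∞` norm). -/
noncomputable def supNorm {m : ℕ} (q : EuclideanSpace ℝ (Fin m)) : ℝ :=
  ‖(EuclideanSpace.equiv (Fin m) ℝ) q‖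

/-- The chart map `F : ℝ³ → ℝ⁴` of the cubic model of `S³`:
`F(x) = (1, x) / √(1 + ‖x‖₂²)`. -/
noncomputable def chartMap (x : EuclideanSpace ℝ (Fin 3)) : EuclideanSpace ℝ (Fin 4) :=
  (Real.sqrt (1 + ‖x‖ ^ 2))⁻¹ •
    (EuclideanSpace.equiv (Fin 4) ℝ).symm (Fin.cons 1 ((EuclideanSpace.equiv (Fin 3) ℝ) x))

lemma consR_zero (a : ℝ) (f : Fin 3 → ℝ) : (Fin.cons a f : Fin 4 → ℝ) 0 = a := rfl
lemma consR_one (a : ℝ) (f : Fin 3 → ℝ) : (Fin.cons a f : Fin 4 → ℝ) 1 = f 0 := rfl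
lemma consR_two (a : ℝ) (f : Fin 3 → ℝ) : (Fin.cons a f : Fin 4 → ℝ) 2 = f 1 := rfl
lemma consR_three (a : ℝ) (f : Fin 3 → ℝ) : (Fin.cons a f : Fin 4 → ℝ) 3 = f 2 := rfl

noncomputable def Lmap : EuclideanSpace ℝ (Fin 3) →ₗ[ℝ] EuclideanSpace ℝ (Fin 4) where
  toFun v := (EuclideanSpace.equiv (Fin 4) ℝ).symm
      (Fin.cons 0 ((EuclideanSpace.equiv (Fin 3) ℝ) v))
  map_add' a b := by
    ext i
    refine Fin.cases ?_ (fun j => ?_) i <;> simp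
  map_smul' c a := by
    ext i
    refine Fin.cases ?_ (fun j => ?_) i <;> simp

noncomputable def LC : EuclideanSpace ℝ (Fin 3) →L[ℝ] EuclideanSpace ℝ (Fin 4) :=
  LinearMap.toContinuousLinearMap Lmap

noncomputable def c0 : EuclideanSpace ℝ (Fin 4) :=
  (EuclideanSpace.equiv (Fin 4) ℝ).symm (Fin.cons 1 0)

lemma chartMap_eq (x : EuclideanSpace ℝ (Fin 3)) :
    chartMap x = (Real.sqrt (1 + ‖x‖ ^ 2))⁻¹ • (c0 + LC x) := by
  unfold chartMap c0 LC Lmap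
  congr 1
  ext i
  refine Fin.cases ?_ (fun j => ?_) i <;> simp

lemma inner_LC_LC (v w : EuclideanSpace ℝ (Fin 3)) : ⟪LC v, LC w⟫ = ⟪v, w⟫ := by
  simp [LC, Lmap, PiLp.inner_apply, Fin.sum_univ_four, Fin.sum_univ_three,
    consR_zero, consR_one, consR_two, consR_three]

lemma inner_c0_LC (v : EuclideanSpace ℝ (Fin 3)) : ⟪c0, LC v⟫ = 0 := by
  simp [LC, Lmap, c0, PiLp.inner_apply, Fin.sum_univ_four,
    consR_zero, consR_one, consR_two, consR_three]

lemma inner_c0_c0 : ⟪c0, c0⟫ = (1:ℝ) := by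
  simp [c0, PiLp.inner_apply, Fin.sum_univ_four, EuclideanSpace.norm_eq,
    consR_zero, consR_one, consR_two, consR_three]

lemma norm_sq_fderiv (x v : EuclideanSpace ℝ (Fin 3)) :
    ‖fderiv ℝ chartMap x v‖ ^ 2 =
      ‖v‖ ^ 2 / (1 + ‖x‖ ^ 2) - ⟪x, v⟫ ^ 2 / (1 + ‖x‖ ^ 2) ^ 2 := by
  have hs : (0:ℝ) < 1 + ‖x‖ ^ 2 := by positivity
  have hsq : Real.sqrt (1 + ‖x‖ ^ 2) ^ 2 = 1 + ‖x‖ ^ 2 := Real.sq_sqrt hs.le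
  have hsp : (0:ℝ) < Real.sqrt (1 + ‖x‖ ^ 2) := Real.sqrt_pos.2 hs
  -- the derivative
  have hg' : HasDerivAt (fun t : ℝ => (Real.sqrt t)⁻¹)
      (-(1 / (2 * Real.sqrt (1 + ‖x‖ ^ 2))) / (Real.sqrt (1 + ‖x‖ ^ 2)) ^ 2)
      (1 + ‖x‖ ^ 2) :=
    (Real.hasDerivAt_sqrt hs.ne').inv (Real.sqrt_ne_zero'.2 hs)
  have hh : HasFDerivAt (fun y : EuclideanSpace ℝ (Fin 3) => 1 + ‖y‖ ^ 2)
      (2 • (innerSL ℝ x)) x :=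
    ((hasStrictFDerivAt_norm_sq x).hasFDerivAt).const_add 1
  have hf := hg'.comp_hasFDerivAt x hh
  have hg : HasFDerivAt (fun y : EuclideanSpace ℝ (Fin 3) => c0 + LC y) (0 + LC) x :=
    (hasFDerivAt_const c0 x).add LC.hasFDerivAt
  have hmain := HasFDerivAt.smul (𝕜 := ℝ) (𝕜' := ℝ) (F := EuclideanSpace ℝ (Fin 4)) hf hg
  have hmain' : HasFDerivAt
      (fun y : EuclideanSpace ℝ (Fin 3) => (Real.sqrt (1 + ‖y‖ ^ 2))⁻¹ • (c0 + LC y))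
      ((Real.sqrt (1 + ‖x‖ ^ 2))⁻¹ • (0 + LC) +
        ((-(1 / (2 * Real.sqrt (1 + ‖x‖ ^ 2))) / (Real.sqrt (1 + ‖x‖ ^ 2)) ^ 2) •
          (2 • (innerSL ℝ x))).smulRight (c0 + LC x)) x := hmain
  rw [show chartMap = fun y : EuclideanSpace ℝ (Fin 3) =>
      (Real.sqrt (1 + ‖y‖ ^ 2))⁻¹ • (c0 + LC y) from funext chartMap_eq,
    hmain'.fderiv]
  set q := Real.sqrt (1 + ‖x‖ ^ 2) with hq
  set β : ℝ := (-(1 / (2 * q)) / q ^ 2) * (2 * ⟪x, v⟫) with hβ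
  have happ : (((q)⁻¹ • (0 + LC) +
        ((-(1 / (2 * q)) / q ^ 2) • (2 • (innerSL ℝ x))).smulRight (c0 + LC x)) v)
      = q⁻¹ • LC v + β • (c0 + LC x) := by
    simp only [ContinuousLinearMap.add_apply, ContinuousLinearMap.smul_apply,
      ContinuousLinearMap.smulRight_apply, ContinuousLinearMap.zero_apply, zero_add,
      ContinuousLinearMap.coe_smul', Pi.smul_apply, innerSL_apply_apply, hβ, smul_smul,
      smul_eq_mul]
    congr 2
    ring
  rw [happ, norm_add_sq_real]
  have h1 : ‖q⁻¹ • LC v‖ ^ 2 = q⁻¹^2 * ‖v‖^2 := by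
    rw [norm_smul]
    have hLv : ‖LC v‖ ^ 2 = ‖v‖ ^ 2 := by
      rw [← real_inner_self_eq_norm_sq, ← real_inner_self_eq_norm_sq, inner_LC_LC]
    rw [mul_pow, hLv]
    simp
  have h2 : ⟪q⁻¹ • LC v, β • (c0 + LC x)⟫ = q⁻¹ * β * ⟪x, v⟫ := by
    rw [real_inner_smul_left, real_inner_smul_right, inner_add_right, inner_LC_LC,
      real_inner_comm c0 (LC v), inner_c0_LC, real_inner_comm x v]
    ring
  have h3 : ‖β • (c0 + LC x)‖ ^ 2 = β^2 * (1 + ‖x‖^2) := by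
    rw [norm_smul]
    have hcc : ‖c0 + LC x‖ ^ 2 = 1 + ‖x‖ ^ 2 := by
      rw [← real_inner_self_eq_norm_sq, inner_add_add_self, inner_c0_c0, inner_c0_LC,
        real_inner_comm c0 (LC x), inner_c0_LC, inner_LC_LC, real_inner_self_eq_norm_sq]
      ring
    rw [mul_pow, hcc]
    simp
  rw [h1, h2, h3, hβ]
  rw [← hsq]
  field_simp
  ring

lemma norm_sq_eq_sum (x : EuclideanSpace ℝ (Fin 3)) :
    ‖x‖ ^ 2 = ∑ i, x i ^ 2 := by
  rw [EuclideanSpace.norm_eq, Real.sq_sqrt (by positivity)]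
  simp [sq_abs]

/-- The metric distortion range of `μ₃` is exactly `[1/4, 1]`: the set of
ratios `‖DF(x)(v)‖₂ / ‖v‖₂` over points `x` of the cube `[-1,1]³` and nonzero tangent
vectors `v` equals the closed interval `[1/4, 1]`. -/
theorem chartMap_metric_distortion_range :
    {r : ℝ | ∃ x v : EuclideanSpace ℝ (Fin 3),
        supNorm x ≤ 1 ∧ v ≠ 0 ∧ r = ‖fderiv ℝ chartMap x v‖ / ‖v‖} =
      Set.Icc (1 / 4 : ℝ) 1 := by
  ext r
  simp only [Set.mem_setOf_eq, Set.mem_Icc]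
  constructor
  · rintro ⟨x, v, hx, hv, rfl⟩
    have hv' : 0 < ‖v‖ := norm_pos_iff.2 hv
    have hx3 : ‖x‖ ^ 2 ≤ 3 := by
      rw [norm_sq_eq_sum]
      have hbd : ∀ i : Fin 3, x i ^ 2 ≤ 1 := by
        intro i
        have h1 : |x i| ≤ 1 := by
          have := norm_le_pi_norm ((EuclideanSpace.equiv (Fin 3) ℝ) x) i
          simpa [supNorm] using this.trans hx
        nlinarith [abs_nonneg (x i), sq_abs (x i)]
      calc ∑ i, x i ^ 2 ≤ ∑ _i : Fin 3, (1:ℝ) := Finset.sum_le_sum fun i _ => hbd i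
        _ = 3 := by simp
    have hs : (0:ℝ) < 1 + ‖x‖ ^ 2 := by positivity
    have hc2 : ⟪x, v⟫ ^ 2 ≤ ‖x‖ ^ 2 * ‖v‖ ^ 2 := by
      have := abs_real_inner_le_norm x v
      nlinarith [abs_nonneg ⟪x, v⟫, sq_abs ⟪x, v⟫, norm_nonneg x, norm_nonneg v]
    set D := ‖fderiv ℝ chartMap x v‖ with hD
    have hD0 : 0 ≤ D := norm_nonneg _
    have hP : D ^ 2 = ‖v‖ ^ 2 / (1 + ‖x‖ ^ 2) - ⟪x, v⟫ ^ 2 / (1 + ‖x‖ ^ 2) ^ 2 :=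
      norm_sq_fderiv x v
    have key : D ^ 2 * (1 + ‖x‖ ^ 2) ^ 2 = ‖v‖ ^ 2 * (1 + ‖x‖ ^ 2) - ⟪x, v⟫ ^ 2 := by
      rw [hP]; field_simp
    constructor
    · -- 1/4 ≤ D/‖v‖
      have h16 : (‖v‖ / 4) ^ 2 ≤ D ^ 2 := by
        nlinarith [key, hc2,
          mul_nonneg (sq_nonneg D)
            (show (0:ℝ) ≤ 16 - (1 + ‖x‖ ^ 2) ^ 2 by nlinarith [sq_nonneg ‖x‖])]
      have h14 : ‖v‖ / 4 ≤ D := by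
        have := Real.sqrt_le_sqrt h16
        rwa [Real.sqrt_sq (by positivity), Real.sqrt_sq hD0] at this
      rw [le_div_iff₀ hv']
      linarith
    · -- D/‖v‖ ≤ 1
      have ha : 0 ≤ ⟪x, v⟫ ^ 2 / (1 + ‖x‖ ^ 2) ^ 2 := by positivity
      have hb : ‖v‖ ^ 2 / (1 + ‖x‖ ^ 2) ≤ ‖v‖ ^ 2 :=
        div_le_self (sq_nonneg _) (by nlinarith [sq_nonneg ‖x‖])
      have hle : D ^ 2 ≤ ‖v‖ ^ 2 := by rw [hP]; linarith
      have hDle : D ≤ ‖v‖ := by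
        have := Real.sqrt_le_sqrt hle
        rwa [Real.sqrt_sq hD0, Real.sqrt_sq hv'.le] at this
      rw [div_le_one hv']
      exact hDle
  · rintro ⟨hr1, hr2⟩
    have hr0 : (0:ℝ) < r := lt_of_lt_of_le (by norm_num) hr1
    have hinv1 : (1:ℝ) ≤ 1 / r := by rw [le_div_iff₀ hr0]; linarith
    have harg : 0 ≤ (1 / r - 1) / 3 := by linarith
    set t := Real.sqrt ((1 / r - 1) / 3) with htdef
    have ht2 : t ^ 2 = (1 / r - 1) / 3 := Real.sq_sqrt harg
    have ht0 : 0 ≤ t := Real.sqrt_nonneg _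
    have hinv4 : 1 / r ≤ 4 := by rw [div_le_iff₀ hr0]; linarith
    have ht1 : t ≤ 1 := by rw [htdef, Real.sqrt_le_one]; linarith
    set x : EuclideanSpace ℝ (Fin 3) := (EuclideanSpace.equiv (Fin 3) ℝ).symm (fun _ => t)
      with hxdef
    set v : EuclideanSpace ℝ (Fin 3) := (EuclideanSpace.equiv (Fin 3) ℝ).symm (fun _ => 1)
      with hvdef
    have hxi : ∀ i, x i = t := fun i => rfl
    have hvi : ∀ i, v i = 1 := fun i => rfl
    have hvne : v ≠ 0 := by
      intro h
      have h0 : v 0 = 0 := by rw [h]; rfl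
      rw [hvi 0] at h0
      exact one_ne_zero h0
    have hxn : ‖x‖ ^ 2 = 3 * t ^ 2 := by
      rw [norm_sq_eq_sum, Fin.sum_univ_three, hxi, hxi, hxi]; ring
    have hvn : ‖v‖ ^ 2 = 3 := by
      rw [norm_sq_eq_sum, Fin.sum_univ_three, hvi, hvi, hvi]; norm_num
    have hvnorm : 0 < ‖v‖ := norm_pos_iff.2 hvne
    have hiv : ⟪x, v⟫ = 3 * t := by
      rw [PiLp.inner_apply, Fin.sum_univ_three]
      simp only [RCLike.inner_apply, conj_trivial, hxi, hvi]
      ring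
    have hs0 : (0:ℝ) < 1 + 3 * t ^ 2 := by positivity
    have hr_eq : r * (1 + 3 * t ^ 2) = 1 := by
      rw [ht2, show (1:ℝ) + 3 * ((1/r - 1)/3) = 1/r by ring]
      exact mul_one_div_cancel hr0.ne'
    refine ⟨x, v, ?_, hvne, ?_⟩
    · have hsup : supNorm x = ‖t‖ := by
        rw [supNorm, hxdef, ContinuousLinearEquiv.apply_symm_apply]; exact pi_norm_const t
      rw [hsup, Real.norm_eq_abs, abs_of_nonneg ht0]
      exact ht1
    · have hD2 : ‖fderiv ℝ chartMap x v‖ ^ 2 = (r * ‖v‖) ^ 2 := by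
        have hexp : (r * ‖v‖) ^ 2 = 3 * r ^ 2 := by
          rw [mul_pow, hvn]; ring
        rw [norm_sq_fderiv, hxn, hiv, hexp, hvn,
          show (3 * t) ^ 2 = 9 * t ^ 2 by ring, ht2]
        field_simp [hr0.ne']
        ring
      have hDeq : ‖fderiv ℝ chartMap x v‖ = r * ‖v‖ := by
        have hsq := congrArg Real.sqrt hD2
        rwa [Real.sqrt_sq (norm_nonneg _), Real.sqrt_sq (by positivity)] at hsq
      rw [hDeq, mul_div_assoc, div_self hvnorm.ne', mul_one]
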